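/- Let E be a directed graph in which every cycle has an exit (Condition (L)), let g be a cycle in E, and suppose every vertex of E^0 connects to some vertex of g^0. Then g is not an exclusive cycle: there exist a vertex u ∈ g^0 and a cycle c based at u such that c is different, as a sequence of edges, from the rotate of g based at u. -/

import Mathlib

/-- A directed graph: a set of vertices, a set of edges, and source/range maps. -/
structure DirGraph where
  V : Type
  E : Type
  src : E → V
  rng : E → V

namespace DirGraph

variable (G : DirGraph)

/-- `Connects u v` means there is a finite path (possibly of length 0) from `u` to `v`,
i.e. `u ≥ v`. -/
inductive Connects : G.V → G.V → Prop
  | refl (v : G.V) : Connects v v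
  | step {u w : G.V} (e : G.E) : G.src e = u → Connects (G.rng e) w → Connects u w

/-- A vertex is a sink if it emits no edges. -/
def IsSink (v : G.V) : Prop := ∀ e : G.E, G.src e ≠ v

/-- A vertex is an infinite emitter if it emits infinitely many edges. -/
def IsInfiniteEmitter (v : G.V) : Prop := {e : G.E | G.src e = v}.Infinite

/-- A vertex is regular if it emits finitely many, but at least one, edges. -/
def IsRegular (v : G.V) : Prop :=
  {e : G.E | G.src e = v}.Finite ∧ {e : G.E | G.src e = v}.Nonempty

/-- A set of vertices is hereditary if it is closed under `≥`. -/
def Hereditary (H : Set G.V) : Prop := ∀ v ∈ H, ∀ w, G.Connects v w → w ∈ H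

/-- A set of vertices is saturated if it contains every regular vertex all of whose
emitted edges have range in the set. -/
def Saturated (H : Set G.V) : Prop :=
  ∀ v, G.IsRegular v → (∀ e : G.E, G.src e = v → G.rng e ∈ H) → v ∈ H

/-- `M(v) = {w : w ≥ v}`. -/
def Mv (v : G.V) : Set G.V := {w | G.Connects w v}

/-- A closed path based at `v`: a nonempty list of consecutive edges starting and ending
at `v`. -/
structure ClosedPath (v : G.V) where
  edges : List G.E
  ne : edges ≠ []
  chain : edges.Chain' (fun e f => G.rng e = G.src f)
  src_eq : G.src (edges.head ne) = v
  rng_eq : G.rng (edges.getLast ne) = v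

/-- A cycle based at `v`: a closed path based at `v` which does not pass through any
vertex twice. -/
structure Cycle (v : G.V) extends ClosedPath G v where
  nodup : (edges.map G.src).Nodup

/-- An infinite path: a sequence of consecutive edges, indexed by `ℕ`. -/
structure InfPath where
  edge : ℕ → G.E
  chain : ∀ n, G.rng (edge n) = G.src (edge (n + 1))

variable {G}

@[ext] lemma InfPath.ext {p q : G.InfPath} (h : p.edge = q.edge) : p = q := by
  cases p; cases q; simp only at h; subst h; rfl

/-- `τ_{>n}(p)`, the shift of the infinite path `p` by `n`. -/
def InfPath.shift (p : G.InfPath) (n : ℕ) : G.InfPath where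
  edge k := p.edge (k + n)
  chain k := by have := p.chain (k + n); rwa [show k + n + 1 = k + 1 + n by omega] at this

/-- Two infinite paths are tail-equivalent if some shift of the first equals some shift
of the second. -/
def TailEquiv (p q : G.InfPath) : Prop := ∃ m n : ℕ, p.shift m = q.shift n

/-- The set `p^0` of vertices visited by the infinite path `p`. -/
def InfPath.vertices (p : G.InfPath) : Set G.V := {v | ∃ n : ℕ, G.src (p.edge n) = v}

/-- `M(p) = {w : w ≥ v for some vertex v on p}`. -/
def Mp (p : G.InfPath) : Set G.V := {w | ∃ v ∈ p.vertices, G.Connects w v}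

/-- The set `c^0` of vertices visited by a closed path `c`. -/
def ClosedPath.vertexSet {v : G.V} (c : G.ClosedPath v) : Set G.V :=
  {w | ∃ e ∈ c.edges, G.src e = w}

/-- An exit for the (closed) path `c`: an edge `e` with `s(e) = s(e_i)` and `e ≠ e_i`
for some `i`. -/
def ClosedPath.HasExit {v : G.V} (c : G.ClosedPath v) : Prop :=
  ∃ (i : Fin c.edges.length) (e : G.E), G.src e = G.src (c.edges.get i) ∧ e ≠ c.edges.get i

lemma ClosedPath.length_pos {v : G.V} (c : G.ClosedPath v) : 0 < c.edges.length :=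
  List.length_pos_iff.mpr c.ne

/-- The rational infinite path `c^∞ = ccc⋯` attached to a closed path `c`. -/
def ClosedPath.toInfPath {v : G.V} (c : G.ClosedPath v) : G.InfPath where
  edge n := c.edges.get ⟨n % c.edges.length, Nat.mod_lt _ c.length_pos⟩
  chain n := by
    have hL : 0 < c.edges.length := c.length_pos
    have hmod : (n + 1) % c.edges.length = (n % c.edges.length + 1) % c.edges.length :=
      (Nat.mod_add_mod n c.edges.length 1).symm
    by_cases h : n % c.edges.length + 1 < c.edges.length
    · have h2 : (n + 1) % c.edges.length = n % c.edges.length + 1 := by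
        rw [hmod, Nat.mod_eq_of_lt h]
      have := List.isChain_iff_getElem.mp c.chain (n % c.edges.length) (by omega)
      simp only [h2]
      convert this using 3 <;> simp
    · have hlast : n % c.edges.length = c.edges.length - 1 := by
        have := Nat.mod_lt n hL; omega
      have h2 : (n + 1) % c.edges.length = 0 := by
        rw [hmod, hlast, Nat.sub_add_cancel hL, Nat.mod_self]
      have e1 : c.edges.get ⟨n % c.edges.length, Nat.mod_lt _ hL⟩ = c.edges.getLast c.ne := by
        rw [List.getLast_eq_getElem]
        simp [hlast]
      have e2 : c.edges.get ⟨(n + 1) % c.edges.length, Nat.mod_lt _ hL⟩ =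
          c.edges.head c.ne := by
        rw [List.head_eq_getElem]
        simp [h2]
      rw [e1, e2, c.rng_eq, c.src_eq]

end DirGraph

namespace DirGraph
variable {G : DirGraph}

lemma InfPath.shift_shift (p : G.InfPath) (m n : ℕ) :
    (p.shift m).shift n = p.shift (n + m) := by
  ext k
  show p.edge (k + n + m) = p.edge (k + (n + m))
  rw [Nat.add_assoc]

/-- Concatenation of two closed paths based at the same vertex. -/
def ClosedPath.comp {v : G.V} (c d : G.ClosedPath v) : G.ClosedPath v where
  edges := c.edges ++ d.edges
  ne := by simp [c.ne]
  chain := by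
    refine c.chain.append d.chain ?_
    intro x hx y hy
    rw [List.getLast?_eq_some_getLast c.ne, Option.mem_def, Option.some_inj] at hx
    rw [List.head?_eq_head d.ne, Option.mem_def, Option.some_inj] at hy
    rw [← hx, ← hy] at *
    rw [c.rng_eq, d.src_eq]
  src_eq := by
    have : (c.edges ++ d.edges).head (by simp [c.ne]) = c.edges.head c.ne := by
      rw [List.head_append]
      simp [c.ne]
    rw [this, c.src_eq]
  rng_eq := by
    have : (c.edges ++ d.edges).getLast (by simp [c.ne]) = d.edges.getLast d.ne := by
      rw [List.getLast_append]
      simp [d.ne]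
    rw [this, d.rng_eq]

/-- `c.pow m` is the closed path `c^{m+1}`. -/
def ClosedPath.pow {v : G.V} (c : G.ClosedPath v) : ℕ → G.ClosedPath v
  | 0 => c
  | (m + 1) => c.comp (c.pow m)

/-- Auxiliary index function for the infinite concatenation of a sequence of closed
paths based at the same vertex: `blockIdx f n` is the pair (block number, offset in
the block) corresponding to overall position `n`. -/
def blockIdx {v : G.V} (f : ℕ → G.ClosedPath v) : ℕ → (b : ℕ) × Fin (f b).edges.length
  | 0 => ⟨0, ⟨0, (f 0).length_pos⟩⟩
  | n + 1 =>
    if h : ((blockIdx f n).2 : ℕ) + 1 < (f (blockIdx f n).1).edges.length then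
      ⟨(blockIdx f n).1, ⟨(blockIdx f n).2 + 1, h⟩⟩
    else
      ⟨(blockIdx f n).1 + 1, ⟨0, (f ((blockIdx f n).1 + 1)).length_pos⟩⟩

/-- The infinite path `f 0 · f 1 · f 2 ⋯` obtained by concatenating a sequence of
closed paths based at the same vertex. -/
def infConcat {v : G.V} (f : ℕ → G.ClosedPath v) : G.InfPath where
  edge n := (f (blockIdx f n).1).edges.get (blockIdx f n).2
  chain n := by
    rw [blockIdx]
    by_cases h : ((blockIdx f n).2 : ℕ) + 1 < (f (blockIdx f n).1).edges.length
    · rw [dif_pos h]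
      exact List.isChain_iff_getElem.mp (f (blockIdx f n).1).chain ((blockIdx f n).2 : ℕ) (by omega)
    · rw [dif_neg h]
      have h2 : ((blockIdx f n).2 : ℕ) = (f (blockIdx f n).1).edges.length - 1 := by
        have := (blockIdx f n).2.isLt; omega
      have e1 : (f (blockIdx f n).1).edges.get (blockIdx f n).2 =
          (f (blockIdx f n).1).edges.getLast (f (blockIdx f n).1).ne := by
        rw [List.getLast_eq_getElem]
        simp only [List.get_eq_getElem]
        congr 1
      have e2 : (f ((blockIdx f n).1 + 1)).edges.get ⟨0, (f ((blockIdx f n).1 + 1)).length_pos⟩ =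
          (f ((blockIdx f n).1 + 1)).edges.head (f ((blockIdx f n).1 + 1)).ne := by
        rw [List.head_eq_getElem]
        rfl
      rw [e1]
      rw [e2]
      rw [(f (blockIdx f n).1).rng_eq]
      rw [(f ((blockIdx f n).1 + 1)).src_eq]

end DirGraph

/-!
Condition (L) gives an exit `e` of `g` at some vertex `u` of `g`; as `g` passes through `u`
only once, `e` is not an edge of `g`. The range of `e` connects to `g`; erasing loops and
stopping at the first vertex `y` of `g` reached yields a path `e q` from `u` to `y` that meets
`g` only at its endpoints. Following `g` from `y` to `u` and then `e q` is a cycle based at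
`y` through `e`, so it differs from the rotate of `g` based at `y`.
-/

namespace DirGraph

section Walks

variable {G : DirGraph}

variable (G) in
@[simp]
def IsWalk : G.V → List G.E → G.V → Prop
  | a, [], b => a = b
  | a, e :: l, b => G.src e = a ∧ IsWalk (G.rng e) l b

theorem isWalk_append {a c : G.V} {l₁ l₂ : List G.E} :
    G.IsWalk a (l₁ ++ l₂) c ↔ ∃ b, G.IsWalk a l₁ b ∧ G.IsWalk b l₂ c := by
  induction l₁ generalizing a with
  | nil => simp
  | cons e l₁ ih => simp [ih, and_assoc]

theorem isWalk_iff_isChain {a b : G.V} {l : List G.E} (hl : l ≠ []) :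
    G.IsWalk a l b ↔ l.IsChain (fun e f => G.rng e = G.src f) ∧
      G.src (l.head hl) = a ∧ G.rng (l.getLast hl) = b := by
  induction l generalizing a with
  | nil => exact absurd rfl hl
  | cons e l ih =>
    cases l with
    | nil => simp
    | cons f l =>
      rw [IsWalk, ih (List.cons_ne_nil f l)]
      simp only [List.isChain_cons_cons, List.head_cons, List.getLast_cons_cons]
      grind

theorem ClosedPath.isWalk {v : G.V} (c : G.ClosedPath v) : G.IsWalk v c.edges v :=
  (isWalk_iff_isChain c.ne).2 ⟨c.chain, c.src_eq, c.rng_eq⟩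

def Cycle.ofIsWalk {v : G.V} (l : List G.E) (hl : l ≠ []) (hw : G.IsWalk v l v)
    (hnd : (l.map G.src).Nodup) : G.Cycle v :=
  have h := (isWalk_iff_isChain hl).1 hw
  { edges := l, ne := hl, chain := h.1, src_eq := h.2.1, rng_eq := h.2.2, nodup := hnd }

theorem IsWalk.rotate {a : G.V} {l : List G.E} (h : G.IsWalk a l a) {j : ℕ}
    (hj : j < l.length) : G.IsWalk (G.src l[j]) (l.rotate j) (G.src l[j]) := by
  rw [← List.take_append_drop j l, isWalk_append] at h
  obtain ⟨b, htake, hdrop⟩ := h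
  obtain rfl : G.src l[j] = b := by
    rw [List.drop_eq_getElem_cons hj] at hdrop
    exact hdrop.1
  rw [List.rotate_eq_drop_append_take hj.le, isWalk_append]
  exact ⟨a, hdrop, htake⟩

theorem Connects.exists_isWalk {a b : G.V} (h : G.Connects a b) : ∃ l, G.IsWalk a l b := by
  induction h with
  | refl v => exact ⟨[], rfl⟩
  | step e hs _ ih =>
    obtain ⟨l, hl⟩ := ih
    exact ⟨e :: l, hs, hl⟩

theorem IsWalk.exists_sublist_nodup {a b : G.V} {l : List G.E} (h : G.IsWalk a l b) :
    ∃ l', l'.Sublist l ∧ G.IsWalk a l' b ∧ (l'.map G.src).Nodup := by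
  induction l generalizing a with
  | nil => exact ⟨[], List.Sublist.slnil, h, List.nodup_nil⟩
  | cons e l ih =>
    obtain ⟨rfl, h⟩ := h
    obtain ⟨l', hsub, hw, hnd⟩ := ih h
    by_cases hmem : G.src e ∈ l'.map G.src
    · -- `l'` returns to `src e`: restart the walk there
      obtain ⟨f, hf, hfe⟩ := List.mem_map.1 hmem
      obtain ⟨l₁, l₂, rfl⟩ := List.append_of_mem hf
      obtain ⟨_, -, rfl, hw₂⟩ := isWalk_append.1 hw
      refine ⟨f :: l₂, ?_, ⟨hfe, hw₂⟩, ?_⟩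
      · exact ((List.sublist_append_right l₁ _).trans hsub).cons e
      · exact (List.nodup_append.1 (List.map_append ▸ hnd)).2.1
    · exact ⟨e :: l', hsub.cons_cons e, ⟨rfl, hw⟩, List.nodup_cons.2 ⟨hmem, hnd⟩⟩

theorem IsWalk.exists_prefix_avoiding {S : Set G.V} {a b : G.V} {l : List G.E}
    (h : G.IsWalk a l b) (hS : b ∈ S ∨ ∃ f ∈ l, G.src f ∈ S) :
    ∃ y ∈ S, ∃ l', l'.IsPrefix l ∧ G.IsWalk a l' y ∧ ∀ f ∈ l', G.src f ∉ S := by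
  induction l generalizing a with
  | nil =>
    obtain rfl : a = b := h
    exact ⟨a, by simpa using hS, [], List.nil_prefix, rfl, by simp⟩
  | cons e l ih =>
    obtain ⟨rfl, h⟩ := h
    by_cases he : G.src e ∈ S
    · exact ⟨G.src e, he, [], List.nil_prefix, rfl, by simp⟩
    · have hS' : b ∈ S ∨ ∃ f ∈ l, G.src f ∈ S := by
        simpa [he] using hS
      obtain ⟨y, hy, l', hpre, hw, hl'⟩ := ih h hS'
      exact ⟨y, hy, e :: l', List.cons_prefix_cons.2 ⟨rfl, hpre⟩, ⟨rfl, hw⟩,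
        by simpa [he] using hl'⟩

theorem Connects.exists_isWalk_avoiding {S : Set G.V} {a x : G.V} (h : G.Connects a x)
    (hx : x ∈ S) :
    ∃ y ∈ S, ∃ l, G.IsWalk a l y ∧ (l.map G.src).Nodup ∧ ∀ f ∈ l, G.src f ∉ S := by
  obtain ⟨l, hl⟩ := h.exists_isWalk
  obtain ⟨l', -, hw, hnd⟩ := hl.exists_sublist_nodup
  obtain ⟨y, hy, l'', hpre, hw', hS⟩ := hw.exists_prefix_avoiding (Or.inl hx)
  exact ⟨y, hy, l'', hw', (hpre.sublist.map G.src).nodup hnd, hS⟩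

theorem Cycle.exists_cycle_mem_edges {v : G.V} (g : G.Cycle v) (j : Fin g.edges.length)
    {e : G.E} (he : G.src e ∈ g.toClosedPath.vertexSet) {q : List G.E}
    (hq : G.IsWalk (G.rng e) q (G.src (g.edges.get j))) (hqnd : (q.map G.src).Nodup)
    (hqS : ∀ f ∈ q, G.src f ∉ g.toClosedPath.vertexSet) :
    ∃ c : G.Cycle (G.src (g.edges.get j)), e ∈ c.edges := by
  have hg : G.IsWalk _ (g.edges.rotate j) _ := g.toClosedPath.isWalk.rotate j.2
  have hgnd : ((g.edges.rotate j).map G.src).Nodup := by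
    rw [List.map_rotate]
    exact List.nodup_rotate.2 g.nodup
  obtain ⟨f, hf, hfe⟩ := he
  obtain ⟨u, rfl, r, hpre, hr, hrS⟩ :=
    hg.exists_prefix_avoiding (S := {G.src e}) (Or.inr ⟨f, List.mem_rotate.2 hf, hfe⟩)
  have hrg : ∀ f ∈ r, f ∈ g.edges := fun f hf => List.mem_rotate.1 (hpre.subset hf)
  have hnd : ((r ++ e :: q).map G.src).Nodup := by
    rw [List.map_append, List.nodup_append]
    refine ⟨(hpre.sublist.map G.src).nodup hgnd, List.nodup_cons.2 ⟨?_, hqnd⟩, ?_⟩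
    · intro hmem
      obtain ⟨f', hf', h'⟩ := List.mem_map.1 hmem
      exact hqS f' hf' (h' ▸ ⟨f, hf, hfe⟩)
    · simp only [List.mem_map, List.mem_cons]
      rintro _ ⟨f₁, hf₁, rfl⟩ _ ⟨f₂, rfl | hf₂, rfl⟩
      · exact hrS f₁ hf₁
      · exact fun h => hqS f₂ hf₂ (h ▸ ⟨f₁, hrg f₁ hf₁, rfl⟩)
  exact ⟨Cycle.ofIsWalk (r ++ e :: q) (by simp) (isWalk_append.2 ⟨_, hr, rfl, hq⟩) hnd,
    List.mem_append_right _ List.mem_cons_self⟩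

end Walks

/-- If every cycle in `E` has an exit (Condition (L)) and every vertex connects to a
vertex of the cycle `g`, then `g` is not exclusive: some vertex `u = s(g_i)` on `g` is
the base of a cycle different from the rotate of `g` based at `u`. -/
theorem not_exclusive_of_condition_L {G : DirGraph}
    (hL : ∀ (u : G.V) (c : G.Cycle u), c.toClosedPath.HasExit)
    {v : G.V} (g : G.Cycle v)
    (hconn : ∀ u : G.V, ∃ x ∈ g.toClosedPath.vertexSet, G.Connects u x) :
    ∃ (i : Fin g.edges.length) (c : G.Cycle (G.src (g.edges.get i))),
      c.edges ≠ g.edges.rotate i := by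
  obtain ⟨i, e, hsrc, hne⟩ := hL v g
  have he : e ∉ g.edges := fun he =>
    hne (List.inj_on_of_nodup_map g.nodup he (List.get_mem _ _) hsrc)
  obtain ⟨x, hx, hex⟩ := hconn (G.rng e)
  obtain ⟨y, ⟨f, hf, rfl⟩, q, hq, hqnd, hqS⟩ := hex.exists_isWalk_avoiding hx
  obtain ⟨j, rfl⟩ := List.mem_iff_get.1 hf
  obtain ⟨c, hc⟩ := g.exists_cycle_mem_edges j ⟨_, List.get_mem _ _, hsrc.symm⟩ hq hqnd hqS
  exact ⟨j, c, fun h => he (List.mem_rotate.1 (h ▸ hc))⟩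

end DirGraph
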